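/- Let n ≥ 1 and R > 0. There exists a constant C > 0, depending only on n and R, with the following property: if A, B : [0,π] → Matrix (Fin n) (Fin n) ℂ have integrable entries with ∫₀^π ‖A(t)‖ dt ≤ R and ∫₀^π ‖B(t)‖ dt ≤ R, if f : [0,π] → ℂⁿ is integrable, c ∈ [0,π], ξ ∈ ℂⁿ, and if y_A, y_B : [0,π] → ℂⁿ are the (unique) continuous solutions of y_A(x) = ξ + ∫_c^x (A(t)y_A(t) + f(t)) dt and y_B(x) = ξ + ∫_c^x (B(t)y_B(t) + f(t)) dt, then sup_{x∈[0,π]} ‖y_A(x) − y_B(x)‖ ≤ C·(‖ξ‖ + ∫₀^π ‖f(t)‖ dt)·∫₀^π ‖A(t) − B(t)‖ dt. -/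

import Mathlib

/-!
Both estimates come from one a priori bound for a solution of `y x = ξ + ∫_c^x (A y + h)`:
taking norms gives `‖y x‖ ≤ ‖ξ‖ + ∫ ‖h‖ + |∫_c^x ‖A‖ ‖y‖|`, and a Gronwall inequality with an
integrable kernel bounds `‖y‖` by `(‖ξ‖ + ∫ ‖h‖) Γ(R)` whenever `∫ ‖A‖ ≤ R`. Applied to `y_B` it
bounds `y_B`; applied to `y_A - y_B`, which solves the system for `A` with `ξ = 0` and
`h = (A - B) y_B`, it gives the theorem with `C = Γ(R)²`.

Since the kernel `g` is only integrable, Gronwall's inequality is proved by cutting `[c, x]` where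
`∫_c g` crosses `1/2, 1, 3/2, …`: on each of the at most `⌈2R⌉ + 1` pieces the mass of `g` is at
most `1/2`, so the maximum of `u` there is at most `2 (K + R M)`, where `M` bounds `u` on the
earlier pieces. This is where `Γ(R) = 2 (2R + 2) ^ ⌈2R⌉` comes from.
-/

open MeasureTheory Set
open scoped Interval Matrix

attribute [local instance] Matrix.linftyOpNormedAddCommGroup

attribute [local instance] Matrix.linftyOpNormedSpace

noncomputable def gronwallFactor (R : ℝ) : ℝ := 2 * (2 * R + 2) ^ ⌈2 * R⌉₊

theorem gronwallFactor_pos {R : ℝ} (hR : 0 ≤ R) : 0 < gronwallFactor R := by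
  unfold gronwallFactor
  positivity

theorem setIntegral_Ioc_add_Ioc {E : Type*} [NormedAddCommGroup E] [NormedSpace ℝ E]
    {f : ℝ → E} {a b c : ℝ} (hab : a ≤ b) (hbc : b ≤ c) (hf : IntegrableOn f (Ioc a c)) :
    (∫ t in Ioc a b, f t) + ∫ t in Ioc b c, f t = ∫ t in Ioc a c, f t := by
  rw [← Ioc_union_Ioc_eq_Ioc hab hbc, setIntegral_union (Ioc_disjoint_Ioc_of_le le_rfl)
    measurableSet_Ioc (hf.mono_set (Ioc_subset_Ioc_right hbc))
    (hf.mono_set (Ioc_subset_Ioc_left hab))]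

theorem setIntegral_Ioc_comp_neg {E : Type*} [NormedAddCommGroup E] [NormedSpace ℝ E]
    (f : ℝ → E) {a b : ℝ} (hab : a ≤ b) :
    ∫ t in Ioc (-b) (-a), f (-t) = ∫ t in Ioc a b, f t := by
  rw [← intervalIntegral.integral_of_le (neg_le_neg hab), ← intervalIntegral.integral_of_le hab,
    intervalIntegral.integral_comp_neg, neg_neg, neg_neg]

theorem setIntegral_Ioc_mono_of_nonneg {g : ℝ → ℝ} {a b p q : ℝ} (hg : IntegrableOn g (Icc a b))
    (hg0 : 0 ≤ g) (hp : a ≤ p) (hq : q ≤ b) : ∫ t in Ioc p q, g t ≤ ∫ t in Ioc a b, g t :=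
  setIntegral_mono_set (hg.mono_set Ioc_subset_Icc_self) (.of_forall hg0)
    (Ioc_subset_Ioc hp hq).eventuallyLE

section Gronwall

variable {g u : ℝ → ℝ} {c b K R : ℝ}

theorem le_of_le_add_integral_Ioc_of_mass_le_half
    (hg : IntegrableOn g (Icc c b)) (hg0 : 0 ≤ g) (hu : ContinuousOn u (Icc c b))
    (hK : 0 ≤ K) (hgR : ∫ t in Ioc c b, g t ≤ R)
    (hyp : ∀ x ∈ Icc c b, u x ≤ K + ∫ t in Ioc c x, g t * u t)
    {y x M : ℝ} (hcy : c ≤ y) (hyx : y ≤ x) (hxb : x ≤ b) (hM : 0 ≤ M)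
    (hle : ∀ t ∈ Ioc c y, u t ≤ M) (hmass : ∫ t in Ioc y x, g t ≤ 1 / 2) :
    ∀ z ∈ Icc y x, u z ≤ 2 * (K + R * M) := by
  obtain ⟨z, hz, hmax⟩ := isCompact_Icc.exists_isMaxOn (nonempty_Icc.2 hyx)
    (hu.mono (Icc_subset_Icc hcy hxb))
  refine fun w hw => (isMaxOn_iff.1 hmax w hw).trans ?_
  have hR : 0 ≤ R := (setIntegral_nonneg measurableSet_Ioc fun t _ => hg0 t).trans hgR
  have hgu : IntegrableOn (fun t => g t * u t) (Icc c b) := hg.mul_continuousOn hu isCompact_Icc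
  have hsub : ∀ {p q}, c ≤ p → q ≤ b → Ioc p q ⊆ Icc c b := fun hp hq =>
    Ioc_subset_Icc_self.trans (Icc_subset_Icc hp hq)
  have hold : ∫ t in Ioc c y, g t * u t ≤ R * M := calc
    _ ≤ ∫ t in Ioc c y, g t * M :=
      setIntegral_mono_on (hgu.mono_set (hsub le_rfl (hyx.trans hxb)))
        ((hg.mono_set (hsub le_rfl (hyx.trans hxb))).mul_const M) measurableSet_Ioc
        fun t ht => mul_le_mul_of_nonneg_left (hle t ht) (hg0 t)
    _ = (∫ t in Ioc c y, g t) * M := integral_mul_const _ _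
    _ ≤ R * M := mul_le_mul_of_nonneg_right
      ((setIntegral_Ioc_mono_of_nonneg hg hg0 le_rfl (hyx.trans hxb)).trans hgR) hM
  have hnew : ∫ t in Ioc y z, g t * u t ≤ (∫ t in Ioc y z, g t) * u z := calc
    _ ≤ ∫ t in Ioc y z, g t * u z :=
      setIntegral_mono_on (hgu.mono_set (hsub hcy (hz.2.trans hxb)))
        ((hg.mono_set (hsub hcy (hz.2.trans hxb))).mul_const _) measurableSet_Ioc
        fun t ht => mul_le_mul_of_nonneg_left
          (isMaxOn_iff.1 hmax t ⟨ht.1.le, ht.2.trans hz.2⟩) (hg0 t)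
    _ = (∫ t in Ioc y z, g t) * u z := integral_mul_const _ _
  have hsplit := setIntegral_Ioc_add_Ioc hcy hz.1 (hgu.mono_set (hsub le_rfl (hz.2.trans hxb)))
  have hz_le := hyp z ⟨hcy.trans hz.1, hz.2.trans hxb⟩
  rcases le_or_gt (u z) 0 with hneg | hpos
  · nlinarith [mul_nonneg hR hM]
  · have hmass_z : ∫ t in Ioc y z, g t ≤ 1 / 2 :=
      (setIntegral_Ioc_mono_of_nonneg (hg.mono_set (Icc_subset_Icc hcy hxb)) hg0 le_rfl hz.2).trans
        hmass
    nlinarith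

theorem le_of_le_add_integral_Ioc_of_mass_le
    (hg : IntegrableOn g (Icc c b)) (hg0 : 0 ≤ g) (hu : ContinuousOn u (Icc c b))
    (hK : 0 ≤ K) (hgR : ∫ t in Ioc c b, g t ≤ R)
    (hyp : ∀ x ∈ Icc c b, u x ≤ K + ∫ t in Ioc c x, g t * u t) (i : ℕ) :
    ∀ x ∈ Icc c b, ∫ t in Ioc c x, g t ≤ i / 2 → u x ≤ 2 * K * (2 * R + 2) ^ i := by
  have hR : 0 ≤ R := (setIntegral_nonneg measurableSet_Ioc fun t _ => hg0 t).trans hgR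
  induction i with
  | zero =>
    intro x hx hmass
    simpa using le_of_le_add_integral_Ioc_of_mass_le_half hg hg0 hu hK hgR hyp le_rfl hx.1 hx.2
      le_rfl (by simp) (by simp at hmass; linarith) x (right_mem_Icc.2 hx.1)
  | succ i ih =>
    intro x hx hmass
    rcases le_or_gt (∫ t in Ioc c x, g t) (i / 2) with hlow | hlow
    · refine (ih x hx hlow).trans ?_
      gcongr
      · linarith
      · omega
    have hG : ContinuousOn (fun x => ∫ t in Ioc c x, g t) (Icc c x) :=
      intervalIntegral.continuousOn_primitive (hg.mono_set (Icc_subset_Icc_right hx.2))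
    obtain ⟨y, hy, hGy⟩ : (i / 2 : ℝ) ∈ (fun x => ∫ t in Ioc c x, g t) '' Icc c x :=
      intermediate_value_Icc hx.1 hG ⟨by simp; positivity, hlow.le⟩
    have hyI : y ∈ Icc c b := ⟨hy.1, hy.2.trans hx.2⟩
    have hlow_y : ∀ t ∈ Ioc c y, u t ≤ 2 * K * (2 * R + 2) ^ i := fun t ht =>
      ih t ⟨ht.1.le, ht.2.trans hyI.2⟩ <| hGy ▸
        setIntegral_Ioc_mono_of_nonneg (hg.mono_set (Icc_subset_Icc_right hyI.2)) hg0 le_rfl ht.2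
    have hsplit := setIntegral_Ioc_add_Ioc hy.1 hy.2
      (hg.mono_set (Ioc_subset_Icc_self.trans (Icc_subset_Icc_right hx.2)))
    have hstep := le_of_le_add_integral_Ioc_of_mass_le_half hg hg0 hu hK hgR hyp hy.1 hy.2 hx.2
      (by positivity) hlow_y (by push_cast at hmass; simp only at hGy; linarith) x
      (right_mem_Icc.2 hy.2)
    have hpow : 1 ≤ (2 * R + 2) ^ i := one_le_pow₀ (by linarith)
    rw [pow_succ]
    nlinarith

theorem le_mul_gronwallFactor_of_le_add_integral_Ioc
    (hg : IntegrableOn g (Icc c b)) (hg0 : 0 ≤ g) (hu : ContinuousOn u (Icc c b))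
    (hK : 0 ≤ K) (hgR : ∫ t in Ioc c b, g t ≤ R)
    (hyp : ∀ x ∈ Icc c b, u x ≤ K + ∫ t in Ioc c x, g t * u t) :
    ∀ x ∈ Icc c b, u x ≤ K * gronwallFactor R := by
  intro x hx
  have hmass : ∫ t in Ioc c x, g t ≤ (⌈2 * R⌉₊ : ℝ) / 2 := by
    linarith [Nat.le_ceil (2 * R), setIntegral_Ioc_mono_of_nonneg hg hg0 le_rfl hx.2]
  have hu_le := le_of_le_add_integral_Ioc_of_mass_le hg hg0 hu hK hgR hyp _ x hx hmass
  rw [gronwallFactor]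
  linarith

theorem le_mul_gronwallFactor_of_le_add_integral_uIoc {a : ℝ} (hc : c ∈ Icc a b)
    (hg : IntegrableOn g (Icc a b)) (hg0 : 0 ≤ g) (hu : ContinuousOn u (Icc a b))
    (hK : 0 ≤ K) (hgR : ∫ t in Icc a b, g t ≤ R)
    (hyp : ∀ x ∈ Icc a b, u x ≤ K + ∫ t in Ι c x, g t * u t) :
    ∀ x ∈ Icc a b, u x ≤ K * gronwallFactor R := by
  rw [integral_Icc_eq_integral_Ioc] at hgR
  have hmass : ∀ {p q}, a ≤ p → q ≤ b → ∫ t in Ioc p q, g t ≤ R := fun hp hq =>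
    (setIntegral_Ioc_mono_of_nonneg hg hg0 hp hq).trans hgR
  intro x hx
  rcases le_total c x with hcx | hxc
  · refine le_mul_gronwallFactor_of_le_add_integral_Ioc (hg.mono_set (Icc_subset_Icc_left hc.1))
      hg0 (hu.mono (Icc_subset_Icc_left hc.1)) hK (hmass hc.1 le_rfl) (fun z hz => ?_) x ⟨hcx, hx.2⟩
    simpa only [uIoc_of_le hz.1] using hyp z ⟨hc.1.trans hz.1, hz.2⟩
  · have hneg : MapsTo (fun t : ℝ => -t) (Icc (-c) (-a)) (Icc a c) := fun t ht =>
      ⟨le_neg.1 ht.2, neg_le.1 ht.1⟩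
    have hrefl := le_mul_gronwallFactor_of_le_add_integral_Ioc (g := fun t => g (-t))
      (u := fun t => u (-t)) (c := -c) (b := -a) (R := R)
      (by simpa using (hg.mono_set (Icc_subset_Icc_right hc.2)).comp_neg)
      (fun t => hg0 (-t)) ((hu.mono (Icc_subset_Icc_right hc.2)).comp continuousOn_neg hneg) hK
      (by rw [setIntegral_Ioc_comp_neg g hc.1]; exact hmass le_rfl hc.2) (fun z hz => ?_)
      (-x) ⟨neg_le_neg hxc, neg_le_neg hx.1⟩
    · simpa using hrefl
    have hz' := hneg hz
    have hz_le := hyp (-z) ⟨hz'.1, hz'.2.trans hc.2⟩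
    rwa [uIoc_of_ge hz'.2, ← setIntegral_Ioc_comp_neg _ hz'.2, neg_neg] at hz_le

end Gronwall

section LinearSystem

variable {ι κ 𝕜 : Type*} [Fintype ι] [Fintype κ] [RCLike 𝕜]

theorem Matrix.linfty_opNorm_le_sum_norm {α : Type*} [NormedAddCommGroup α]
    (A : Matrix ι κ α) : ‖A‖ ≤ ∑ i, ∑ j, ‖A i j‖ := by
  have hsup : (Finset.univ.sup fun i => ∑ j, ‖A i j‖₊) ≤ ∑ i, ∑ j, ‖A i j‖₊ :=
    Finset.sup_le fun i _ => Finset.single_le_sum (f := fun i => ∑ j, ‖A i j‖₊) (fun _ _ => zero_le)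
      (Finset.mem_univ i)
  rw [Matrix.linfty_opNorm_def]
  simpa using NNReal.coe_le_coe.2 hsup

theorem Matrix.aestronglyMeasurable_of_forall_entry {X : Type*} [MeasurableSpace X]
    {μ : Measure X} {A : X → Matrix ι κ 𝕜}
    (hA : ∀ i j, AEStronglyMeasurable (fun x => A x i j) μ) : AEStronglyMeasurable A μ := by
  classical
  have hsum : A = fun x => ∑ i, ∑ j, A x i j • Matrix.single i j (1 : 𝕜) := by
    funext x
    simp_rw [Matrix.smul_single, smul_eq_mul, mul_one]
    exact Matrix.matrix_eq_sum_single (A x)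
  rw [hsum]
  exact Finset.aestronglyMeasurable_fun_sum _ fun i _ =>
    Finset.aestronglyMeasurable_fun_sum _ fun j _ => (hA i j).smul_const _

theorem Matrix.integrable_norm_of_forall_entry {X : Type*} [MeasurableSpace X] {μ : Measure X}
    {A : X → Matrix ι κ 𝕜} (hA : ∀ i j, Integrable (fun x => A x i j) μ) :
    Integrable (fun x => ‖A x‖) μ :=
  Integrable.mono'
    (integrable_finsetSum _ fun i _ => integrable_finsetSum _ fun j _ => (hA i j).norm)
    (Matrix.aestronglyMeasurable_of_forall_entry fun i j => (hA i j).aestronglyMeasurable).norm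
    (.of_forall fun x => (abs_of_nonneg (norm_nonneg _)).trans_le (A x).linfty_opNorm_le_sum_norm)

theorem integrableOn_mulVec {X : Type*} [MeasurableSpace X] [TopologicalSpace X] [T2Space X]
    [OpensMeasurableSpace X] {μ : Measure X} {s : Set X} (hs : IsCompact s)
    {A : X → Matrix ι κ 𝕜} {y : X → κ → 𝕜}
    (hA : ∀ i j, IntegrableOn (fun x => A x i j) s μ) (hy : ContinuousOn y s) :
    IntegrableOn (fun x => A x *ᵥ y x) s μ :=
  Integrable.of_eval fun i => integrable_finsetSum _ fun j _ =>
    (hA i j).mul_continuousOn ((continuous_apply j).comp_continuousOn hy) hs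

theorem integral_norm_mulVec_le {X : Type*} [MeasurableSpace X] [TopologicalSpace X] [T2Space X]
    [OpensMeasurableSpace X] {μ : Measure X} {s : Set X} (hs : IsCompact s)
    {A : X → Matrix ι κ 𝕜} {y : X → κ → 𝕜} {M : ℝ}
    (hA : ∀ i j, IntegrableOn (fun x => A x i j) s μ) (hy : ContinuousOn y s)
    (hM : ∀ x ∈ s, ‖y x‖ ≤ M) :
    ∫ x in s, ‖A x *ᵥ y x‖ ∂μ ≤ (∫ x in s, ‖A x‖ ∂μ) * M := by
  rw [← integral_mul_const]
  exact setIntegral_mono_on (integrableOn_mulVec hs hA hy).norm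
    ((Matrix.integrable_norm_of_forall_entry hA).mul_const M) hs.measurableSet fun x hx =>
    (Matrix.linfty_opNorm_mulVec _ _).trans (mul_le_mul_of_nonneg_left (hM x hx) (norm_nonneg _))

variable {A B : ℝ → Matrix ι ι 𝕜} {h f y yA yB : ℝ → ι → 𝕜} {ξ : ι → 𝕜} {a b c R : ℝ}

theorem norm_le_mul_gronwallFactor_of_eq_add_integral_mulVec (hc : c ∈ Icc a b)
    (hA : ∀ i j, IntegrableOn (fun t => A t i j) (Icc a b)) (hAR : ∫ t in Icc a b, ‖A t‖ ≤ R)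
    (hh : IntegrableOn h (Icc a b)) (hy : ContinuousOn y (Icc a b))
    (hyeq : ∀ x ∈ Icc a b, y x = ξ + ∫ t in c..x, (A t *ᵥ y t + h t)) :
    ∀ x ∈ Icc a b, ‖y x‖ ≤ (‖ξ‖ + ∫ t in Icc a b, ‖h t‖) * gronwallFactor R := by
  have hAn : IntegrableOn (fun t => ‖A t‖) (Icc a b) := Matrix.integrable_norm_of_forall_entry hA
  have hAyn : IntegrableOn (fun t => ‖A t‖ * ‖y t‖) (Icc a b) :=
    hAn.mul_continuousOn hy.norm isCompact_Icc
  refine le_mul_gronwallFactor_of_le_add_integral_uIoc hc hAn (fun t => norm_nonneg _) hy.norm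
    (by positivity) hAR fun x hx => ?_
  have hsub : Ι c x ⊆ Icc a b := uIoc_subset_uIcc.trans (uIcc_subset_Icc hc hx)
  have hh_le : ∫ t in Ι c x, ‖h t‖ ≤ ∫ t in Icc a b, ‖h t‖ :=
    setIntegral_mono_set hh.norm (.of_forall fun t => norm_nonneg _) hsub.eventuallyLE
  calc ‖y x‖ = ‖ξ + ∫ t in c..x, (A t *ᵥ y t + h t)‖ := by rw [hyeq x hx]
    _ ≤ ‖ξ‖ + ∫ t in Ι c x, ‖A t *ᵥ y t + h t‖ :=
      (norm_add_le _ _).trans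
        (by gcongr; exact intervalIntegral.norm_integral_le_integral_norm_uIoc)
    _ ≤ ‖ξ‖ + ∫ t in Ι c x, (‖A t‖ * ‖y t‖ + ‖h t‖) := by
      refine add_le_add le_rfl <| setIntegral_mono_on
        (((integrableOn_mulVec isCompact_Icc hA hy).add hh).mono_set hsub).norm
        ((hAyn.add hh.norm).mono_set hsub) measurableSet_uIoc fun t _ => ?_
      exact (norm_add_le _ _).trans (add_le_add_left (Matrix.linfty_opNorm_mulVec _ _) _)
    _ = ‖ξ‖ + (∫ t in Ι c x, ‖A t‖ * ‖y t‖) + ∫ t in Ι c x, ‖h t‖ := by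
      rw [integral_add (hAyn.mono_set hsub) (hh.mono_set hsub).norm, add_assoc]
    _ ≤ ‖ξ‖ + (∫ t in Icc a b, ‖h t‖) + ∫ t in Ι c x, ‖A t‖ * ‖y t‖ := by linarith

theorem sub_eq_integral_of_eq_add_integral_mulVec (hc : c ∈ Icc a b)
    (hA : ∀ i j, IntegrableOn (fun t => A t i j) (Icc a b))
    (hB : ∀ i j, IntegrableOn (fun t => B t i j) (Icc a b)) (hf : IntegrableOn f (Icc a b))
    (hyA : ContinuousOn yA (Icc a b)) (hyB : ContinuousOn yB (Icc a b))
    (hyAeq : ∀ x ∈ Icc a b, yA x = ξ + ∫ t in c..x, (A t *ᵥ yA t + f t))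
    (hyBeq : ∀ x ∈ Icc a b, yB x = ξ + ∫ t in c..x, (B t *ᵥ yB t + f t)) :
    ∀ x ∈ Icc a b,
      yA x - yB x = ∫ t in c..x, (A t *ᵥ (yA t - yB t) + (A t - B t) *ᵥ yB t) := by
  intro x hx
  have hsub : [[c, x]] ⊆ Icc a b := uIcc_subset_Icc hc hx
  have hA' : IntervalIntegrable (fun t => A t *ᵥ yA t + f t) volume c x :=
    (((integrableOn_mulVec isCompact_Icc hA hyA).add hf).mono_set hsub).intervalIntegrable
  have hB' : IntervalIntegrable (fun t => B t *ᵥ yB t + f t) volume c x :=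
    (((integrableOn_mulVec isCompact_Icc hB hyB).add hf).mono_set hsub).intervalIntegrable
  rw [hyAeq x hx, hyBeq x hx, add_sub_add_left_eq_sub, ← intervalIntegral.integral_sub hA' hB']
  congr 1
  funext t
  rw [Matrix.mulVec_sub, Matrix.sub_mulVec]
  abel

end LinearSystem

theorem sturm_liouville_linear_system_continuous_dependence
    (n : ℕ) (R : ℝ) (hR : 0 < R) :
    ∃ C > (0:ℝ), ∀ (A B : ℝ → Matrix (Fin n) (Fin n) ℂ) (f : ℝ → Fin n → ℂ)
      (c : ℝ) (ξ : Fin n → ℂ) (yA yB : ℝ → Fin n → ℂ),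
      (∀ i j, IntegrableOn (fun t => A t i j) (Icc 0 Real.pi)) →
      (∀ i j, IntegrableOn (fun t => B t i j) (Icc 0 Real.pi)) →
      (∫ t in Icc (0:ℝ) Real.pi, ‖A t‖) ≤ R →
      (∫ t in Icc (0:ℝ) Real.pi, ‖B t‖) ≤ R →
      IntegrableOn f (Icc 0 Real.pi) →
      c ∈ Icc (0:ℝ) Real.pi →
      ContinuousOn yA (Icc 0 Real.pi) →
      (∀ x ∈ Icc (0:ℝ) Real.pi,
        yA x = ξ + ∫ t in c..x, ((A t).mulVec (yA t) + f t)) →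
      ContinuousOn yB (Icc 0 Real.pi) →
      (∀ x ∈ Icc (0:ℝ) Real.pi,
        yB x = ξ + ∫ t in c..x, ((B t).mulVec (yB t) + f t)) →
      ∀ x ∈ Icc (0:ℝ) Real.pi,
        ‖yA x - yB x‖ ≤
          C * (‖ξ‖ + ∫ t in Icc (0:ℝ) Real.pi, ‖f t‖) *
            ∫ t in Icc (0:ℝ) Real.pi, ‖A t - B t‖ := by
  have hΓ := gronwallFactor_pos hR.le
  refine ⟨gronwallFactor R ^ 2, pow_pos hΓ 2, ?_⟩
  intro A B f c ξ yA yB hA hB hAR hBR hf hc hyA hyAeq hyB hyBeq x hx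
  have hAB : ∀ i j, IntegrableOn (fun t => (A t - B t) i j) (Icc 0 Real.pi) :=
    fun i j => (hA i j).sub (hB i j)
  have hyB_le := norm_le_mul_gronwallFactor_of_eq_add_integral_mulVec hc hB hBR hf hyB hyBeq
  have hdiff := norm_le_mul_gronwallFactor_of_eq_add_integral_mulVec (ξ := 0) hc hA hAR
    (integrableOn_mulVec isCompact_Icc hAB hyB) (hyA.sub hyB) (fun x hx => by
      rw [zero_add]
      exact sub_eq_integral_of_eq_add_integral_mulVec hc hA hB hf hyA hyB hyAeq hyBeq x hx) x hx
  rw [norm_zero, zero_add] at hdiff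
  calc ‖yA x - yB x‖
      ≤ (∫ t in Icc 0 Real.pi, ‖(A t - B t) *ᵥ yB t‖) * gronwallFactor R := hdiff
    _ ≤ ((∫ t in Icc 0 Real.pi, ‖A t - B t‖) * ((‖ξ‖ + ∫ t in Icc 0 Real.pi, ‖f t‖) *
          gronwallFactor R)) * gronwallFactor R :=
      mul_le_mul_of_nonneg_right (integral_norm_mulVec_le isCompact_Icc hAB hyB hyB_le) hΓ.le
    _ = _ := by ring
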